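/- arXiv:2306.07127 — 3 statements merged into one kernel-verified Lean document; each statement's English description precedes it below -/
import Mathlib

section
/- Let A be a noetherian integral domain with infinitely many elements, let m be a maximal ideal of A, let M be a finitely generated A-module with glen_A M ≥ 1, and let r ∈ ℤ_{>0}. Then for all sufficiently large e ∈ ℤ_{>0}, the cardinality of M ⊗_A A/m^e is greater than r. -/
open scoped TensorProduct

universe u

/-- The generic `A`-length of a module `M` over an integral domain `A`:
`dim_{K(A)} (M ⊗_A K(A))` where `K(A)` is the fraction field. -/
noncomputable def glen (A : Type u) [CommRing A] [IsDomain A]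
    (M : Type u) [AddCommGroup M] [Module A M] : ℕ :=
  Module.finrank (FractionRing A) (FractionRing A ⊗[A] M)

/-!
Since `M ⊗_A A/mᵉ ≅ M/mᵉM`, it suffices to show that `M/mᵉM` grows. A module of positive generic
length is faithful. If `m = 0`, then `mᵉM = 0` for `e ≥ 1`, and a faithful module over the infinite
ring `A` is infinite. If `m ≠ 0`, Nakayama's lemma and faithfulness make the chain `mᵉM` strictly
decreasing, so every step at least doubles the size of the quotient and `#(M/mᵉM) ≥ 2ᵉ`.
-/

open Cardinal

theorem Submodule.mk_eq_mk_mul_mk_quotient {R M : Type*} [Ring R] [AddCommGroup M] [Module R M]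
    (S : Submodule R M) : #M = #S * #(M ⧸ S) := by
  rw [mk_congr (AddSubgroup.addGroupEquivQuotientProdAddSubgroup (s := S.toAddSubgroup)), mk_prod,
    lift_id, lift_id, mul_comm]
  rfl

theorem Submodule.two_mul_mk_quotient_le_of_lt {R M : Type*} [Ring R] [AddCommGroup M]
    [Module R M] {S T : Submodule R M} (h : T < S) : 2 * #(M ⧸ S) ≤ #(M ⧸ T) := by
  have hS : S.map T.mkQ ≠ ⊥ := by
    rw [Ne, ← le_bot_iff, Submodule.map_le_iff_le_comap, Submodule.comap_bot, Submodule.ker_mkQ]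
    exact h.not_ge
  have : Nontrivial (S.map T.mkQ) := Submodule.nontrivial_iff_ne_bot.mpr hS
  rw [(S.map T.mkQ).mk_eq_mk_mul_mk_quotient,
    mk_congr (Submodule.quotientQuotientEquivQuotient T S h.le).toEquiv]
  gcongr
  exact two_le_iff.mpr (exists_pair_ne _)

theorem Submodule.two_pow_le_mk_quotient_of_strictAnti {R M : Type*} [Ring R] [AddCommGroup M]
    [Module R M] {N : ℕ → Submodule R M} (hN : StrictAnti N) (e : ℕ) : 2 ^ e ≤ #(M ⧸ N e) := by
  induction e with
  | zero => simpa using Cardinal.one_le_iff_ne_zero.mpr (mk_ne_zero _)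
  | succ e ih =>
    calc (2 : Cardinal) ^ (e + 1) = 2 * 2 ^ e := pow_succ' 2 e
      _ ≤ 2 * #(M ⧸ N e) := by gcongr
      _ ≤ #(M ⧸ N (e + 1)) := two_mul_mk_quotient_le_of_lt (hN e.lt_succ_self)

theorem Infinite.of_faithfulSMul {A M : Type*} [Infinite A] [SMul A M] [FaithfulSMul A M] :
    Infinite M := by
  refine not_finite_iff_infinite.mp fun _ => ?_
  have : Infinite (M → M) := Infinite.of_injective (fun a : A => (a • · : M → M))
    fun _ _ h => FaithfulSMul.eq_of_smul_eq_smul (congrFun h)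
  exact _root_.not_finite (M → M)

theorem faithfulSMul_of_one_le_glen {A : Type u} [CommRing A] [IsDomain A]
    {M : Type u} [AddCommGroup M] [Module A M] (h : 1 ≤ glen A M) : FaithfulSMul A M := by
  rw [← Module.annihilator_eq_bot, Submodule.eq_bot_iff]
  intro c hc
  by_contra hc0
  have : Subsingleton (FractionRing A ⊗[A] M) :=
    (IsLocalizedModule.subsingleton_iff (nonZeroDivisors A)
      (TensorProduct.mk A (FractionRing A) M 1)).2
      fun x => ⟨c, mem_nonZeroDivisors_of_ne_zero hc0, Module.mem_annihilator.mp hc x⟩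
  have : glen A M = 0 := Module.finrank_zero_of_subsingleton
  omega

theorem Ideal.strictAnti_pow_smul_top {R M : Type*} [CommRing R] [IsDomain R] [AddCommGroup M]
    [Module R M] [IsNoetherian R M] [FaithfulSMul R M] {I : Ideal R} (hI : I ≠ ⊤) (hI0 : I ≠ ⊥) :
    StrictAnti fun e => I ^ e • (⊤ : Submodule R M) := by
  refine strictAnti_nat_of_succ_lt fun e =>
    (Submodule.smul_mono_left (Ideal.pow_le_pow_right e.le_succ)).lt_of_ne fun heq => ?_
  have hle : I ^ e • (⊤ : Submodule R M) ≤ I • I ^ e • ⊤ := by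
    rw [← Submodule.smul_assoc, smul_eq_mul, ← pow_succ', heq]
  -- Nakayama: some `c ≡ 1 mod I` kills `Iᵉ M`, so for `0 ≠ s ∈ I` the nonzero `c sᵉ` kills `M`.
  obtain ⟨c, hc1, hc⟩ := Submodule.exists_sub_one_mem_and_smul_eq_zero_of_fg_of_le_smul I _
    (IsNoetherian.noetherian _) hle
  have hc0 : c ≠ 0 := by
    rintro rfl
    exact hI (I.eq_top_of_isUnit_mem hc1 (by simp))
  obtain ⟨s, hs, hs0⟩ := Submodule.exists_mem_ne_zero_of_ne_bot hI0
  refine mul_ne_zero hc0 (pow_ne_zero e hs0) (FaithfulSMul.eq_of_smul_eq_smul (α := M) fun x => ?_)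
  rw [mul_smul, zero_smul]
  exact hc _ (Submodule.smul_mem_smul (Ideal.pow_mem_pow hs e) trivial)

theorem card_tensor_quotient_pow_maximalIdeal_gt_general
    {A : Type u} [CommRing A] [IsDomain A] [IsNoetherianRing A] [Infinite A]
    (m : Ideal A) [m.IsMaximal]
    (M : Type u) [AddCommGroup M] [Module A M] [Module.Finite A M]
    (hglen : 1 ≤ glen A M) (r : ℕ) :
    ∃ e₀ : ℕ, 0 < e₀ ∧ ∀ e : ℕ, e₀ ≤ e →
      (r : Cardinal) < Cardinal.mk (M ⊗[A] (A ⧸ (m ^ e))) := by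
  have := faithfulSMul_of_one_le_glen hglen
  refine ⟨r + 1, r.succ_pos, fun e he => ?_⟩
  rw [mk_congr (TensorProduct.tensorQuotEquivQuotSMul M (m ^ e)).toEquiv]
  by_cases hm : m = ⊥
  · subst hm
    have := Infinite.of_faithfulSMul (A := A) (M := M)
    have hbot : (⊥ : Ideal A) ^ e • (⊤ : Submodule A M) = ⊥ := by
      rw [Ideal.bot_pow (by omega), Submodule.bot_smul]
    rw [mk_congr (Submodule.quotEquivOfEqBot _ hbot).toEquiv]
    exact natCast_lt_aleph0.trans_le (aleph0_le_mk M)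
  · calc (r : Cardinal) < 2 ^ e := by
          exact_mod_cast r.lt_two_pow_self.trans_le (Nat.pow_le_pow_right two_pos (by omega))
      _ ≤ #(M ⧸ m ^ e • (⊤ : Submodule A M)) :=
        Submodule.two_pow_le_mk_quotient_of_strictAnti
          (Ideal.strictAnti_pow_smul_top ‹m.IsMaximal›.ne_top hm) e

/-- **Lemma (App-3).**  Let `A` be a noetherian integral domain with infinitely many
elements, let `m` be a maximal ideal of `A`, let `M` be a finitely generated
`A`-module with `glen_A M ≥ 1`, and let `r ∈ ℤ_{>0}`.  Then for all sufficiently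
large `e ∈ ℤ_{>0}`, `#(M ⊗_A A/m^e) > r`. -/
theorem card_tensor_quotient_pow_maximalIdeal_gt
    {A : Type u} [CommRing A] [IsDomain A] [IsNoetherianRing A] [Infinite A]
    (m : Ideal A) [m.IsMaximal]
    (M : Type u) [AddCommGroup M] [Module A M] [Module.Finite A M]
    (hglen : 1 ≤ glen A M) (r : ℕ) (hr : 0 < r) :
    ∃ e₀ : ℕ, 0 < e₀ ∧ ∀ e : ℕ, e₀ ≤ e →
      (r : Cardinal) < Cardinal.mk (M ⊗[A] (A ⧸ (m ^ e))) :=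
  card_tensor_quotient_pow_maximalIdeal_gt_general m M hglen r
end

section
/- Let R be a noetherian ring, let M be a finitely generated R-module, and let n ∈ ℤ_{>0}. For each i ∈ {1, …, n} let p_i be a prime ideal of R, set R_i := R/p_i, and let M_i be an R-submodule of M. Assume for each i: (a) p_i · (M/M_i) = 0, so that M/M_i is an R_i-module; (b) if dim R_i = 0 then glen_{R_i}(M/M_i) > log₂ n; (c) if dim R_i ≥ 1 then glen_{R_i}(M/M_i) ≥ 1. Then M₁ ∪ M₂ ∪ ⋯ ∪ M_n ≠ M. -/
/-!
By B. H. Neumann's lemma, if finitely many cosets of subgroups cover an abelian group, one of the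
subgroups has index at most the number of cosets. So it suffices that no `M ⧸ Mᵢ` is finite with at
most `n` elements. With `k = R ⧸ pᵢ`, `M ⧸ Mᵢ ≃ k ⊗[R] (M ⧸ Mᵢ)` is a `k`-module of rank `glen`. If `k`
is a field, a finite `k`-vector space of dimension `d > log₂ n` has at least `2 ^ d > n` elements.
Otherwise `k` is an infinite domain, and a finite module over an infinite ring is torsion (two
scalars act alike on each element), so its rank is `0 < glen`.
-/

open scoped TensorProduct

universe u

/-- For a prime ideal `p` of `R` and an `R`-module `N` (killed by `p`, so that `N` is
a module over `R_p := R/p`), the generic `R/p`-length of `N`: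
`dim_{K(R/p)} (N ⊗_{R/p} K(R/p))`, where `K(R/p)` is the fraction field of the
domain `R/p`. -/
noncomputable def glenP (R : Type u) [CommRing R] (p : Ideal R) (hp : p.IsPrime)
    (N : Type u) [AddCommGroup N] [Module R N] : ℕ :=
  haveI := hp
  Module.finrank (FractionRing (R ⧸ p))
    (FractionRing (R ⧸ p) ⊗[R ⧸ p] ((R ⧸ p) ⊗[R] N))

open scoped Pointwise in
theorem Submodule.exists_finite_quotient_natCard_le_of_iUnion_eq_univ {R M ι : Type*} [Ring R]
    [AddCommGroup M] [Module R M] [Fintype ι] {p : ι → Submodule R M}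
    (hcovers : ⋃ i, (p i : Set M) = Set.univ) :
    ∃ i, Finite (M ⧸ p i) ∧ Nat.card (M ⧸ p i) ≤ Fintype.card ι := by
  have hcovers' : ⋃ i ∈ Finset.univ, (0 : M) +ᵥ ((p i).toAddSubgroup : Set M) = Set.univ := by
    simpa using hcovers
  obtain ⟨i, -, hfin, hle⟩ := AddSubgroup.exists_index_le_card_of_leftCoset_cover hcovers'
  exact ⟨i, AddSubgroup.finite_quotient_of_finiteIndex, hle⟩

theorem Module.finrank_eq_zero_of_infinite_of_finite {R M : Type*} [Ring R] [Infinite R]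
    [AddCommGroup M] [Module R M] [Finite M] : Module.finrank R M = 0 := by
  refine Module.finrank_eq_zero_of_rank_eq_zero <| rank_eq_zero_iff.mpr fun x ↦ ?_
  obtain ⟨a, b, hab, h⟩ := Finite.exists_ne_map_eq_of_infinite fun a : R ↦ a • x
  exact ⟨a - b, sub_ne_zero.mpr hab, by rw [sub_smul, h, sub_self]⟩

theorem Module.two_pow_finrank_le_natCard {K V : Type*} [DivisionRing K] [AddCommGroup V]
    [Module K V] [Finite V] : 2 ^ Module.finrank K V ≤ Nat.card V := by
  rcases (Module.finrank K V).eq_zero_or_pos with hd | hd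
  · rw [hd]
    exact Nat.card_pos
  have hcard := Module.natCard_eq_pow_finrank (K := K) (V := V)
  have hK : Nat.card K ≠ 0 := by
    intro h
    rw [h, zero_pow hd.ne'] at hcard
    exact Nat.card_pos.ne' hcard
  have : Finite K := Nat.finite_of_card_ne_zero hK
  rw [hcard]
  exact Nat.pow_le_pow_left Finite.one_lt_card _

theorem Nat.lt_two_pow_of_logb_lt {n d : ℕ} (h : Real.logb 2 n < d) : n < 2 ^ d := by
  rcases n.eq_zero_or_pos with rfl | hn
  · exact Nat.two_pow_pos d
  rw [Real.logb_lt_iff_lt_rpow one_lt_two (by exact_mod_cast hn), Real.rpow_natCast] at h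
  exact_mod_cast h

theorem one_le_ringKrullDim_of_not_isField {D : Type*} [CommRing D] [IsDomain D]
    (h : ¬ IsField D) : 1 ≤ ringKrullDim D := by
  by_contra! hlt
  have : Ring.KrullDimLE 0 D := by
    rw [Ring.KrullDimLE, Order.krullDimLE_iff]
    exact Order.le_of_lt_succ hlt
  exact h Ring.KrullDimLE.isField_of_isDomain

noncomputable def TensorProduct.quotTensorEquivOfLeAnnihilator {R N : Type*} [CommRing R]
    [AddCommGroup N] [Module R N] {I : Ideal R} (hI : I ≤ Module.annihilator R N) :
    (R ⧸ I) ⊗[R] N ≃ₗ[R] N :=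
  quotTensorEquivQuotSMul N I ≪≫ₗ Submodule.quotEquivOfEqBot _
    (Submodule.le_annihilator_iff.mp (by rwa [Submodule.annihilator_top] :
      I ≤ (⊤ : Submodule R N).annihilator))

theorem glenP_eq_finrank (R : Type u) [CommRing R] (p : Ideal R) (hp : p.IsPrime)
    (N : Type u) [AddCommGroup N] [Module R N] :
    glenP R p hp N = Module.finrank (R ⧸ p) ((R ⧸ p) ⊗[R] N) :=
  have := hp
  (TensorProduct.isBaseChange (R ⧸ p) ((R ⧸ p) ⊗[R] N) (FractionRing (R ⧸ p))).finrank_eq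

theorem lt_natCard_of_glenP {R : Type u} [CommRing R] (p : Ideal R) (hp : p.IsPrime)
    (N : Type u) [AddCommGroup N] [Module R N] [Finite N] (hann : p ≤ Module.annihilator R N)
    (n : ℕ) (hglen₀ : ringKrullDim (R ⧸ p) = 0 → Real.logb 2 n < glenP R p hp N)
    (hglen₁ : 1 ≤ ringKrullDim (R ⧸ p) → 1 ≤ glenP R p hp N) :
    n < Nat.card N := by
  have := hp
  let e := TensorProduct.quotTensorEquivOfLeAnnihilator hann
  have : Finite ((R ⧸ p) ⊗[R] N) := .of_equiv N e.toEquiv.symm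
  rw [← Nat.card_congr e.toEquiv]
  rw [glenP_eq_finrank] at hglen₀ hglen₁
  by_cases hF : IsField (R ⧸ p)
  · let := hF.toField
    exact (Nat.lt_two_pow_of_logb_lt (hglen₀ (ringKrullDim_eq_zero_of_isField hF))).trans_le
      Module.two_pow_finrank_le_natCard
  · have : Infinite (R ⧸ p) :=
      not_finite_iff_infinite.mp fun _ ↦ hF (Finite.isField_of_domain _)
    have hpos := hglen₁ (one_le_ringKrullDim_of_not_isField hF)
    rw [Module.finrank_eq_zero_of_infinite_of_finite] at hpos
    omega

theorem union_submodules_ne_top_general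
    {R : Type u} [CommRing R]
    (M : Type u) [AddCommGroup M] [Module R M]
    (n : ℕ) (p : Fin n → Ideal R) (hp : ∀ i, (p i).IsPrime)
    (Msub : Fin n → Submodule R M)
    (hann : ∀ i, p i ≤ Module.annihilator R (M ⧸ Msub i))
    (hglen₀ : ∀ i, ringKrullDim (R ⧸ p i) = 0 →
      Real.logb 2 n < (glenP R (p i) (hp i) (M ⧸ Msub i) : ℝ))
    (hglen₁ : ∀ i, 1 ≤ ringKrullDim (R ⧸ p i) →
      1 ≤ glenP R (p i) (hp i) (M ⧸ Msub i)) :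
    (⋃ i, (Msub i : Set M)) ≠ Set.univ := by
  intro hcover
  obtain ⟨i, _, hcard⟩ := Submodule.exists_finite_quotient_natCard_le_of_iUnion_eq_univ hcover
  rw [Fintype.card_fin] at hcard
  exact hcard.not_gt
    (lt_natCard_of_glenP (p i) (hp i) (M ⧸ Msub i) (hann i) n (hglen₀ i) (hglen₁ i))

/-- **Lemma (App-main).**  Let `R` be a noetherian ring and `M` a finitely generated
`R`-module.  For `i ∈ {1, …, n}` let `p_i` be a prime ideal of `R`, `R_i := R/p_i`,
and `M_i ⊆ M` an `R`-submodule.  Assume for each `i`: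
`p_i (M/M_i) = 0`; if `dim R_i = 0` then `glen_{R_i} (M/M_i) > log₂ n`; and if
`dim R_i ≥ 1` then `glen_{R_i} (M/M_i) ≥ 1`.  Then `M₁ ∪ ⋯ ∪ M_n ≠ M`. -/
theorem union_submodules_ne_top
    {R : Type u} [CommRing R] [IsNoetherianRing R]
    (M : Type u) [AddCommGroup M] [Module R M] [Module.Finite R M]
    (n : ℕ) (hn : 0 < n) (p : Fin n → Ideal R) (hp : ∀ i, (p i).IsPrime)
    (Msub : Fin n → Submodule R M)
    (hann : ∀ i, p i ≤ Module.annihilator R (M ⧸ Msub i))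
    (hglen₀ : ∀ i, ringKrullDim (R ⧸ p i) = 0 →
      Real.logb 2 n < (glenP R (p i) (hp i) (M ⧸ Msub i) : ℝ))
    (hglen₁ : ∀ i, 1 ≤ ringKrullDim (R ⧸ p i) →
      1 ≤ glenP R (p i) (hp i) (M ⧸ Msub i)) :
    (⋃ i, (Msub i : Set M)) ≠ Set.univ :=
  union_submodules_ne_top_general M n p hp Msub hann hglen₀ hglen₁
end

section
/- Let X be a noetherian scheme, let L be an invertible sheaf on X, let s ∈ H^0(X, L), and let φ : O_X → L be the morphism of O_X-modules determined by s. Then the following are equivalent: (1) φ is injective; (2) s(x) ≠ 0 for every associated point x of X; (3) for every associated point x of X, the closure of {x} in X is not contained in Supp(Z(s)). -/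
open AlgebraicGeometry CategoryTheory Opposite TopologicalSpace
open scoped ENNReal
universe u
namespace Paper
variable {X Y S : Scheme.{u}}

/-- Restriction map on sections, as a ring homomorphism. -/
noncomputable def rmap {X : Scheme.{u}} {U V : X.Opens} (h : V ≤ U) : Γ(X, U) →+* Γ(X, V) :=
  (X.presheaf.map (homOfLE h).op).hom

lemma rmap_rmap {U V W : X.Opens} (h1 : V ≤ U) (h2 : W ≤ V) (x : Γ(X, U)) :
    rmap h2 (rmap h1 x) = rmap (h2.trans h1) x := by
  rw [rmap, rmap, rmap, ← RingHom.comp_apply, ← CommRingCat.hom_comp, ← Functor.map_comp]; rfl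

/-- Restriction of invertible sections. -/
noncomputable def ures {X : Scheme.{u}} {U V : X.Opens} (h : V ≤ U) : Γ(X, U)ˣ →* Γ(X, V)ˣ :=
  Units.map (rmap h).toMonoidHom

@[simp] lemma ures_val {U V : X.Opens} (h : V ≤ U) (u : Γ(X, U)ˣ) :
    (ures h u).val = rmap h u.val := rfl

lemma ures_ures {U V W : X.Opens} (h1 : V ≤ U) (h2 : W ≤ V) (u : Γ(X, U)ˣ) :
    ures h2 (ures h1 u) = ures (h2.trans h1) u :=
  Units.ext (rmap_rmap h1 h2 u.val)

/-- An invertible sheaf on a scheme, presented by transition cocycle data on an open cover. -/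
structure InvSheaf (X : Scheme.{u}) where
  ι : Type u
  U : ι → X.Opens
  covers : ∀ x : X, ∃ i, x ∈ U i
  g : ∀ i j, Γ(X, U i ⊓ U j)ˣ
  cocycle : ∀ i j k,
    ures (inf_le_left : (U i ⊓ U j) ⊓ U k ≤ U i ⊓ U j) (g i j) *
      ures (le_inf (inf_le_left.trans inf_le_right) inf_le_right) (g j k) =
      ures (le_inf (inf_le_left.trans inf_le_left) inf_le_right) (g i k)

namespace InvSheaf

lemma cocycle_at (L : InvSheaf X) (i j k : L.ι) {T : X.Opens}
    (hij : T ≤ L.U i ⊓ L.U j) (hjk : T ≤ L.U j ⊓ L.U k) (hik : T ≤ L.U i ⊓ L.U k)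
    (hT : T ≤ (L.U i ⊓ L.U j) ⊓ L.U k) :
    ures hij (L.g i j) * ures hjk (L.g j k) = ures hik (L.g i k) := by
  have h := congrArg (ures hT) (L.cocycle i j k)
  rw [map_mul, ures_ures, ures_ures, ures_ures] at h
  exact h

/-- Integer tensor powers (in particular, the dual for `n = -1`). -/
noncomputable def ipow (L : InvSheaf X) (n : ℤ) : InvSheaf X where
  ι := L.ι
  U := L.U
  covers := L.covers
  g i j := L.g i j ^ n
  cocycle i j k := by
    simp only [map_zpow, ← mul_zpow, L.cocycle i j k]

/-- Tensor product of two invertible sheaves. -/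
noncomputable def tensor (L M : InvSheaf X) : InvSheaf X where
  ι := L.ι × M.ι
  U p := L.U p.1 ⊓ M.U p.2
  covers x := ⟨⟨(L.covers x).choose, (M.covers x).choose⟩,
    ⟨(L.covers x).choose_spec, (M.covers x).choose_spec⟩⟩
  g p q := ures (le_inf (inf_le_left.trans inf_le_left) (inf_le_right.trans inf_le_left))
      (L.g p.1 q.1) *
    ures (le_inf (inf_le_left.trans inf_le_right) (inf_le_right.trans inf_le_right))
      (M.g p.2 q.2)
  cocycle p q r := by
    simp only [map_mul, ures_ures]
    rw [mul_mul_mul_comm]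
    rw [L.cocycle_at p.1 q.1 r.1
        (le_inf ((inf_le_left.trans inf_le_left).trans inf_le_left)
          ((inf_le_left.trans inf_le_right).trans inf_le_left))
        (le_inf ((inf_le_left.trans inf_le_right).trans inf_le_left)
          (inf_le_right.trans inf_le_left))
        (le_inf ((inf_le_left.trans inf_le_left).trans inf_le_left)
          (inf_le_right.trans inf_le_left))
        (le_inf (le_inf ((inf_le_left.trans inf_le_left).trans inf_le_left)
          ((inf_le_left.trans inf_le_right).trans inf_le_left))
          (inf_le_right.trans inf_le_left)),
      M.cocycle_at p.2 q.2 r.2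
        (le_inf ((inf_le_left.trans inf_le_left).trans inf_le_right)
          ((inf_le_left.trans inf_le_right).trans inf_le_right))
        (le_inf ((inf_le_left.trans inf_le_right).trans inf_le_right)
          (inf_le_right.trans inf_le_right))
        (le_inf ((inf_le_left.trans inf_le_left).trans inf_le_right)
          (inf_le_right.trans inf_le_right))
        (le_inf (le_inf ((inf_le_left.trans inf_le_left).trans inf_le_right)
          ((inf_le_left.trans inf_le_right).trans inf_le_right))
          (inf_le_right.trans inf_le_right))]


end InvSheaf

lemma rmap_appLE (h : Y ⟶ X) {U : X.Opens} {V V' : Y.Opens} (e : V ≤ h ⁻¹ᵁ U)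
    (hv : V' ≤ V) (x : Γ(X, U)) :
    rmap hv (h.appLE U V e x) = h.appLE U V' (hv.trans e) x := by
  rw [rmap, ← comp_apply, Scheme.Hom.appLE_map]

lemma appLE_rmap (h : Y ⟶ X) {U U' : X.Opens} (hu : U' ≤ U) {V : Y.Opens}
    (e : V ≤ h ⁻¹ᵁ U') (x : Γ(X, U)) :
    h.appLE U' V e (rmap hu x) =
      h.appLE U V (e.trans ((Opens.map h.base).map (homOfLE hu)).le) x := by
  rw [rmap, ← comp_apply, Scheme.Hom.map_appLE]

namespace InvSheaf

/-- Pullback of an invertible sheaf along a morphism of schemes. -/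
noncomputable def pullback (h : Y ⟶ X) (L : InvSheaf X) : InvSheaf Y where
  ι := L.ι
  U i := h ⁻¹ᵁ L.U i
  covers y := ⟨(L.covers (h.base y)).choose, (L.covers (h.base y)).choose_spec⟩
  g i j := Units.map (h.appLE (L.U i ⊓ L.U j) (h ⁻¹ᵁ L.U i ⊓ h ⁻¹ᵁ L.U j)
      (fun _ hx => hx)).hom.toMonoidHom (L.g i j)
  cocycle i j k := by
    apply Units.ext
    have eT : ((h ⁻¹ᵁ L.U i ⊓ h ⁻¹ᵁ L.U j) ⊓ h ⁻¹ᵁ L.U k) ≤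
        h ⁻¹ᵁ ((L.U i ⊓ L.U j) ⊓ L.U k) := fun _ hx => hx
    have h0 := congrArg Units.val (L.cocycle i j k)
    rw [Units.val_mul] at h0
    simp only [ures_val] at h0
    have h2 := congrArg (h.appLE ((L.U i ⊓ L.U j) ⊓ L.U k) _ eT) h0
    rw [map_mul, appLE_rmap, appLE_rmap, appLE_rmap] at h2
    show rmap _ (h.appLE _ _ _ (L.g i j).val) * rmap _ (h.appLE _ _ _ (L.g j k).val)
      = rmap _ (h.appLE _ _ _ (L.g i k).val)
    convert h2 using 2 <;> exact rmap_appLE _ _ _ _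

end InvSheaf

/-- `Γ(X, V ⊓ W)` is a `Γ(X, V)`-module via restriction. -/
noncomputable instance secFactorModule (V W : X.Opens) : Module Γ(X, V) Γ(X, V ⊓ W) :=
  Module.compHom _ (rmap (inf_le_left : V ⊓ W ≤ V))

namespace InvSheaf

/-- The module of sections of an invertible sheaf over an open subset `V`:
families of local sections in the trivializations, compatible via the transition
cocycle. -/
noncomputable def secSubmodule (L : InvSheaf X) (V : X.Opens) :
    Submodule Γ(X, V) (∀ i, Γ(X, V ⊓ L.U i)) where
  carrier := {s | ∀ i j,
    rmap (le_inf inf_le_left (inf_le_right.trans inf_le_left) :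
      V ⊓ (L.U i ⊓ L.U j) ≤ V ⊓ L.U i) (s i) =
    (ures (inf_le_right : V ⊓ (L.U i ⊓ L.U j) ≤ L.U i ⊓ L.U j) (L.g i j)).val *
      rmap (le_inf inf_le_left (inf_le_right.trans inf_le_right)) (s j)}
  add_mem' := by
    intro a b ha hb i j
    simp only [Pi.add_apply, map_add, mul_add, ha i j, hb i j]
  zero_mem' := by
    intro i j
    simp only [Pi.zero_apply, map_zero, mul_zero]
  smul_mem' := by
    intro a s hs i j
    show rmap _ (rmap (inf_le_left : V ⊓ L.U i ≤ V) a * s i)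
      = _ * rmap _ (rmap (inf_le_left : V ⊓ L.U j ≤ V) a * s j)
    rw [map_mul, map_mul, rmap_rmap, rmap_rmap, hs i j]
    ring

/-- The type of sections of `L` over `V`. -/
abbrev Sections (L : InvSheaf X) (V : X.Opens) : Type u := ↥(L.secSubmodule V)

/-- The open locus where a section of an invertible sheaf does not vanish
(i.e. the complement of the support of its zero scheme). -/
noncomputable def nonvanishing {L : InvSheaf X} {V : X.Opens} (σ : L.Sections V) : X.Opens :=
  ⨆ i, X.basicOpen (σ.1 i)

/-- Pullback of a section along a morphism of schemes. -/
noncomputable def spull (h : Y ⟶ X) {L : InvSheaf X} {V : X.Opens} (σ : L.Sections V) :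
    (L.pullback h).Sections (h ⁻¹ᵁ V) := by
  refine ⟨fun i => h.appLE (V ⊓ L.U i) (h ⁻¹ᵁ V ⊓ h ⁻¹ᵁ L.U i) (fun _ hx => hx) (σ.1 i), ?_⟩
  intro i j
  have e'' : (h ⁻¹ᵁ V ⊓ (h ⁻¹ᵁ L.U i ⊓ h ⁻¹ᵁ L.U j)) ≤ h ⁻¹ᵁ (V ⊓ (L.U i ⊓ L.U j)) :=
    fun _ hx => hx
  have hc := congrArg (h.appLE (V ⊓ (L.U i ⊓ L.U j)) _ e'') (σ.2 i j)
  rw [map_mul, appLE_rmap, appLE_rmap] at hc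
  show rmap _ (h.appLE _ _ _ (σ.1 i)) = _ * rmap _ (h.appLE _ _ _ (σ.1 j))
  simp only [ures_val] at hc
  rw [appLE_rmap] at hc
  exact (rmap_appLE h _ _ (σ.1 i)).trans (hc.trans
    (congrArg₂ (· * ·) (rmap_appLE h _ _ (L.g i j).val).symm (rmap_appLE h _ _ (σ.1 j)).symm))

end InvSheaf

open InvSheaf

/-- A scheme morphism presenting `Y` as the reduced scheme `X_red` associated to `X`:
a closed immersion from a reduced scheme which is a bijection onto the underlying
topological space. -/
def IsReduction {Y X : Scheme.{u}} (ρ : Y ⟶ X) : Prop :=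
  IsClosedImmersion ρ ∧ IsReduced Y ∧ Function.Surjective ρ.base

/-- Relative ampleness (EGA II.4.6.3 / Stacks 01VG + 01PR): over suitable affine opens
of the base, the affine non-vanishing loci of sections of powers of `A` cover. -/
def RelAmple (f : X ⟶ S) (A : InvSheaf X) : Prop :=
  ∀ y : S, ∃ W : S.Opens, y ∈ W ∧ IsAffineOpen W ∧
    ∀ x : X, x ∈ f ⁻¹ᵁ W → ∃ n : ℕ, 0 < n ∧
      ∃ σ : (A.ipow n).Sections (f ⁻¹ᵁ W),
        x ∈ nonvanishing σ ∧ IsAffineOpen (nonvanishing σ)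

/-- Relative nefness, via the standard characterization: `L` is `f`-nef iff
`L^{⊗n} ⊗ A` is `f`-ample for every `f`-ample `A` and every `n ≥ 0`. -/
def RelNef (f : X ⟶ S) (L : InvSheaf X) : Prop :=
  ∀ A : InvSheaf X, RelAmple f A → ∀ n : ℕ, RelAmple f ((L.ipow n).tensor A)

/-- `f_* L ≠ 0`. -/
def PushforwardNeZero (f : X ⟶ S) (L : InvSheaf X) : Prop :=
  ∃ (W : S.Opens) (σ : L.Sections (f ⁻¹ᵁ W)), σ ≠ 0

/-- `L` is `f`-weakly big: for some `m > 0` and some `f`-ample `A`,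
`(f|_{X_red})_* ((L^{⊗m} ⊗ A^{-1})|_{X_red}) ≠ 0`.  (When `X` is irreducible this
is `f`-bigness.) -/
def WeaklyBig (f : X ⟶ S) (L : InvSheaf X) : Prop :=
  ∃ m : ℕ, 0 < m ∧ ∃ A : InvSheaf X, RelAmple f A ∧
    ∀ (X' : Scheme.{u}) (ρ : X' ⟶ X), IsReduction ρ →
      PushforwardNeZero (ρ ≫ f) (((L.ipow m).tensor (A.ipow (-1))).pullback ρ)

/-- The `f`-exceptional locus: the union of all integral closed subschemes `V ⊆ X`
such that `L|_V` is not `(f|_V)`-big. -/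
def ExcLocus (f : X ⟶ S) (L : InvSheaf X) : Set X :=
  {x | ∃ (V : Scheme.{u}) (ι : V ⟶ X), IsClosedImmersion ι ∧ IsIntegral V ∧
    ¬ WeaklyBig (ι ≫ f) (L.pullback ι) ∧ x ∈ Set.range ι.base}

/-- The `f`-base locus `Bs_f(L) = Supp Coker (f^* f_* L → L)`: the set of points at
which the germs of sections of `L` defined over preimages of neighbourhoods of the
image point do not generate `L`. -/
def BaseLocus (f : X ⟶ S) (L : InvSheaf X) : Set X :=
  {x | ∀ (W : S.Opens), f.base x ∈ W → ∀ σ : L.Sections (f ⁻¹ᵁ W), x ∉ nonvanishing σ}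

/-- The `f`-stable base locus. -/
def StableBaseLocus (f : X ⟶ S) (L : InvSheaf X) : Set X :=
  ⋂ (m : ℕ) (_ : 0 < m), BaseLocus f (L.ipow m)

/-- The `f`-augmented base locus, computed with respect to an `f`-ample `A`
(the result is independent of this choice). -/
def AugBaseLocus (f : X ⟶ S) (L A : InvSheaf X) : Set X :=
  ⋂ (m : ℕ) (_ : 0 < m), StableBaseLocus f ((L.ipow m).tensor (A.ipow (-1)))

/-- A projective morphism of (noetherian) schemes: a proper morphism admitting a
relatively ample invertible sheaf (EGA II.5.5.3). -/
def IsProjectiveMorphism (f : X ⟶ S) : Prop :=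
  IsProper f ∧ ∃ A : InvSheaf X, RelAmple f A

/-- A global section `s` of `L` is regular if the associated morphism
`O_X → L` is injective; equivalently `Z(s)` defines an effective Cartier divisor. -/
def IsRegularSection {L : InvSheaf X} (σ : L.Sections ⊤) : Prop :=
  ∀ (V : X.Opens) (a : Γ(X, V)),
    (∀ i, rmap (inf_le_left : V ⊓ L.U i ≤ V) a *
      rmap (le_inf le_top inf_le_right : V ⊓ L.U i ≤ ⊤ ⊓ L.U i) (σ.1 i) = 0) → a = 0

/-- The relative dimension `dim (X/S)`: the dimension of the fibre of `f` over the
generic point of the irreducible base `S` (with `dim ∅ = ⊥ = -∞`). -/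
noncomputable def relDim {X S : Scheme.{u}} (f : X ⟶ S) [IrreducibleSpace S] :
    WithBot ℕ∞ :=
  letI F : Scheme.{u} := Limits.pullback f (S.fromSpecResidueField (genericPoint S))
  topologicalKrullDim F

/-- Interpretation of `m ^ (d - j)` in `ℝ≥0∞`, for `d ∈ {-∞} ∪ ℕ∞` and `j ∈ ℕ`
(with `m ^ (-∞) = 0`). -/
noncomputable def mpowSub (m : ℕ) (d : WithBot ℕ∞) (j : ℕ) : ℝ≥0∞ :=
  match d with
  | ⊥ => 0
  | (e : ℕ∞) =>
    match e with
    | ⊤ => ⊤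
    | (n : ℕ) => (m : ℝ≥0∞) ^ ((n : ℤ) - (j : ℤ))

/-- Embedding `{-∞} ∪ ℕ∞ → ℝ≥0∞` (sending `-∞` to `0`). -/
noncomputable def wbToEnnreal : WithBot ℕ∞ → ℝ≥0∞
  | ⊥ => 0
  | (e : ℕ∞) => match e with
    | ⊤ => ⊤
    | (n : ℕ) => n

/-- The length of a module, as the Krull dimension of its lattice of submodules. -/
noncomputable def modLength (R : Type*) [Ring R] (M : Type*) [AddCommGroup M]
    [Module R M] : WithBot ℕ∞ :=
  Order.krullDim (Submodule R M)

/-- The generic length `glen_R M` of a module over a ring whose nilradical is prime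
(e.g. the ring of functions of an irreducible scheme): the length of the localization
of `M` at the minimal prime over the localized ring. -/
noncomputable def glen (R : Type u) [CommRing R] (hp : (nilradical R).IsPrime)
    (M : Type u) [AddCommGroup M] [Module R M] : WithBot ℕ∞ :=
  haveI := hp
  modLength (Localization (nilradical R).primeCompl)
    (LocalizedModule (nilradical R).primeCompl M)

/-- The sections of `L` over `f⁻¹(W)`, i.e. the `W`-sections of `f_* L`. -/
noncomputable def pushSections (f : X ⟶ S) (L : InvSheaf X) (W : S.Opens) : Type u :=
  L.Sections (f ⁻¹ᵁ W)

noncomputable instance (f : X ⟶ S) (L : InvSheaf X) (W : S.Opens) :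
    AddCommGroup (pushSections f L W) :=
  inferInstanceAs (AddCommGroup (L.Sections (f ⁻¹ᵁ W)))

/-- `f_* L (W)` is a module over `Γ(S, W)`. -/
noncomputable instance (f : X ⟶ S) (L : InvSheaf X) (W : S.Opens) :
    Module Γ(S, W) (pushSections f L W) :=
  Module.compHom (L.Sections (f ⁻¹ᵁ W)) ((f.app W).hom : Γ(S, W) →+* Γ(X, f ⁻¹ᵁ W))


/-- A point `x` of a scheme `X` is an associated point of `X` if the maximal ideal
of the local ring `O_{X,x}` is an associated prime of `O_{X,x}` as a module over
itself. -/
def IsAssociatedPoint (X : Scheme.{u}) (x : X) : Prop :=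
  IsLocalRing.maximalIdeal (X.presheaf.stalk x) ∈
    associatedPrimes (X.presheaf.stalk x) (X.presheaf.stalk x)

/-!
If `φ` is injective and `s(x) = 0` at an associated point `x`, write `m_x = Ann(b)` with
`b ≠ 0`; then `b s_x = 0`, and a local lift of `b` lies in the kernel of `φ`, because by the
cocycle relation it suffices to kill `s` in a single trivialization. Conversely, a nonzero `a`
in the kernel of `φ` restricts to a nonzero element of a noetherian affine ring `Γ(W, O_X)`
killing `s|_W`. An associated prime `P ⊇ Ann(a|_W)` then contains `s|_W`, and since
`O_{X,y} = Γ(W, O_X)_P` at the point `y` of `P`, the point `y` is an associated point of `X`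
with `s(y) = 0`. Conditions (2) and (3) agree because the nonvanishing locus of `s` is open.
-/

lemma basicOpen_rmap {U V : X.Opens} (h : V ≤ U) (f : Γ(X, U)) :
    X.basicOpen (rmap h f) = V ⊓ X.basicOpen f :=
  X.basicOpen_res f (homOfLE h).op

lemma germ_rmap {U V : X.Opens} (h : V ≤ U) (x : X) (hx : x ∈ V) (f : Γ(X, U)) :
    X.presheaf.germ V x hx (rmap h f) = X.presheaf.germ U x (h hx) f :=
  X.presheaf.germ_res_apply (homOfLE h) x hx f

lemma exists_rmap_eq_zero_of_germ_eq_zero {U : X.Opens} {x : X} (hx : x ∈ U) {f : Γ(X, U)}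
    (hf : X.presheaf.germ U x hx f = 0) :
    ∃ W : X.Opens, x ∈ W ∧ ∃ hW : W ≤ U, rmap hW f = 0 := by
  obtain ⟨W, hxW, iU, iU', hW⟩ := X.presheaf.germ_eq x hx hx f 0 (hf.trans (map_zero _).symm)
  exact ⟨W, hxW, iU.le, by rw [← map_zero (X.presheaf.map iU'.op).hom]; exact hW⟩

lemma exists_germ_ne_zero {U : X.Opens} {f : Γ(X, U)} (hf : f ≠ 0) :
    ∃ x, ∃ hx : x ∈ U, X.presheaf.germ U x hx f ≠ 0 := by
  by_contra! h
  exact hf (TopCat.Presheaf.section_ext X.sheaf U f 0 fun x hx => (h x hx).trans (map_zero _).symm)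

lemma _root_.AlgebraicGeometry.IsAffineOpen.fromSpec_mem_basicOpen_iff {U : X.Opens}
    (hU : IsAffineOpen U) (P : PrimeSpectrum Γ(X, U)) (f : Γ(X, U)) :
    hU.fromSpec P ∈ X.basicOpen f ↔ f ∉ P.asIdeal := by
  change P ∈ hU.fromSpec ⁻¹ᵁ X.basicOpen f ↔ _
  rw [hU.fromSpec_preimage_basicOpen]
  rfl

lemma _root_.AlgebraicGeometry.IsAffineOpen.isAssociatedPoint_fromSpec {U : X.Opens}
    (hU : IsAffineOpen U) {P : PrimeSpectrum Γ(X, U)}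
    (hP : P.asIdeal ∈ associatedPrimes Γ(X, U) Γ(X, U)) :
    IsAssociatedPoint X (hU.fromSpec P) := by
  have hPU : hU.fromSpec P ∈ U := hU.range_fromSpec.le ⟨P, rfl⟩
  let : Algebra Γ(X, U) (X.presheaf.stalk (hU.fromSpec P)) :=
    X.presheaf.algebra_section_stalk ⟨_, hPU⟩
  have : IsLocalization.AtPrime (X.presheaf.stalk (hU.fromSpec P)) P.asIdeal :=
    hU.isLocalization_stalk' P hPU
  apply
    Module.associatedPrimes.mem_associatedPrimes_of_comap_mem_associatedPrimes_of_isLocalizedModule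
    P.asIdeal.primeCompl (Algebra.linearMap Γ(X, U) (X.presheaf.stalk (hU.fromSpec P)))
  rwa [← Ideal.under_def, IsLocalization.AtPrime.under_maximalIdeal _ P.asIdeal]

section

variable {L : InvSheaf X}

/-- `a` lies in the kernel of `φ : O_X → L` over `V`, read in the trivializations of `L`. -/
def Annihilates {V : X.Opens} (a : Γ(X, V)) (σ : L.Sections ⊤) : Prop :=
  ∀ i, rmap (inf_le_left : V ⊓ L.U i ≤ V) a *
    rmap (le_inf le_top inf_le_right : V ⊓ L.U i ≤ ⊤ ⊓ L.U i) (σ.1 i) = 0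

lemma mem_nonvanishing_iff {V : X.Opens} (σ : L.Sections V) {i : L.ι} {y : X} (hy : y ∈ L.U i) :
    y ∈ nonvanishing σ ↔ y ∈ X.basicOpen (σ.1 i) := by
  refine ⟨fun h => ?_, fun h => Opens.mem_iSup.mpr ⟨i, h⟩⟩
  obtain ⟨j, hj⟩ := Opens.mem_iSup.mp h
  have hyj := X.basicOpen_le (σ.1 j) hj
  have hb := congrArg X.basicOpen (σ.2 i j)
  rw [basicOpen_rmap, Scheme.basicOpen_mul, basicOpen_rmap,
    Scheme.basicOpen_of_isUnit _ (Units.isUnit _)] at hb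
  have hyij : y ∈ V ⊓ (L.U i ⊓ L.U j) := ⟨hyj.1, hy, hyj.2⟩
  have : y ∈ (V ⊓ (L.U i ⊓ L.U j)) ⊓ X.basicOpen (σ.1 i) := by
    rw [hb]
    exact ⟨hyij, hyij, hj⟩
  exact this.2

lemma annihilates_of_mul_eq_zero (σ : L.Sections ⊤) {V : X.Opens} {i : L.ι} (hV : V ≤ L.U i)
    {a : Γ(X, V)} (ha : a * rmap (le_inf le_top hV) (σ.1 i) = 0) : Annihilates a σ := by
  intro j
  have hW : V ⊓ L.U j ≤ ⊤ ⊓ (L.U j ⊓ L.U i) :=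
    le_inf le_top (le_inf inf_le_right (inf_le_left.trans hV))
  have hσ := congrArg (rmap hW) (σ.2 j i)
  rw [map_mul, rmap_rmap, rmap_rmap] at hσ
  have ha' := congrArg (rmap (inf_le_left : V ⊓ L.U j ≤ V)) ha
  rw [map_mul, rmap_rmap, map_zero] at ha'
  rw [hσ, mul_left_comm, ha', mul_zero]

lemma IsRegularSection.mem_nonvanishing [IsLocallyNoetherian X] {σ : L.Sections ⊤}
    (hσ : IsRegularSection σ) {x : X} (hx : IsAssociatedPoint X x) : x ∈ nonvanishing σ := by
  obtain ⟨i, hi⟩ := L.covers x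
  have hx' : x ∈ ⊤ ⊓ L.U i := ⟨trivial, hi⟩
  rw [mem_nonvanishing_iff σ hi, X.mem_basicOpen _ x hx']
  by_contra hunit
  obtain ⟨-, b, hb⟩ := isAssociatedPrime_iff.mp hx
  have hb0 : b ≠ 0 := by
    rintro rfl
    rw [Submodule.bot_colon', Submodule.span_zero_singleton, Submodule.annihilator_bot] at hb
    exact (IsLocalRing.maximalIdeal.isMaximal _).ne_top hb
  have hσb : X.presheaf.germ _ x hx' (σ.1 i) * b = 0 := by
    have hmem : X.presheaf.germ _ x hx' (σ.1 i) ∈ IsLocalRing.maximalIdeal _ := hunit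
    rwa [hb, Submodule.bot_colon', Submodule.mem_annihilator_span_singleton] at hmem
  obtain ⟨W, hxW, a, rfl⟩ := X.presheaf.exists_germ_eq b
  have hxW' : x ∈ W ⊓ L.U i := ⟨hxW, hi⟩
  obtain ⟨W', hxW', hW', hzero⟩ := exists_rmap_eq_zero_of_germ_eq_zero hxW'
    (f := rmap inf_le_left a * rmap (le_inf le_top inf_le_right) (σ.1 i))
    (by rw [map_mul, germ_rmap, germ_rmap, mul_comm]; exact hσb)
  rw [map_mul, rmap_rmap, rmap_rmap] at hzero
  have ha : rmap (hW'.trans inf_le_left) a = 0 :=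
    hσ W' _ (annihilates_of_mul_eq_zero σ (hW'.trans inf_le_right) hzero)
  exact hb0 (by rw [← germ_rmap (hW'.trans inf_le_left) x hxW', ha, map_zero])

lemma isRegularSection_of_forall_mem_nonvanishing [IsLocallyNoetherian X] (σ : L.Sections ⊤)
    (h : ∀ x, IsAssociatedPoint X x → x ∈ nonvanishing σ) : IsRegularSection σ := by
  intro V a ha
  by_contra ha0
  obtain ⟨x, hxV, hax⟩ := exists_germ_ne_zero ha0
  obtain ⟨i, hi⟩ := L.covers x
  obtain ⟨W, hW : IsAffineOpen W, hxW, hWle⟩ :=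
    Opens.isBasis_iff_nbhd.mp X.isBasis_affineOpens (show x ∈ V ⊓ L.U i from ⟨hxV, hi⟩)
  have := IsLocallyNoetherian.component_noetherian ⟨W, hW⟩
  set aW := rmap (hWle.trans inf_le_left) a
  set sW := rmap (le_inf le_top (hWle.trans inf_le_right)) (σ.1 i)
  have haW : aW ≠ 0 := fun h0 => hax <| by
    rw [← germ_rmap (hWle.trans inf_le_left) x hxW]
    change X.presheaf.germ W x hxW aW = 0
    rw [h0, map_zero]
  have hasW : aW * sW = 0 := by
    have := congrArg (rmap (le_inf (hWle.trans inf_le_left) (hWle.trans inf_le_right))) (ha i)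
    rwa [map_mul, rmap_rmap, rmap_rmap, map_zero] at this
  obtain ⟨P, hP, hle⟩ := exists_le_isAssociatedPrime_of_isNoetherianRing Γ(X, W) aW haW
  have hsP : sW ∈ P := hle (by
    rwa [Submodule.bot_colon', Submodule.mem_annihilator_span_singleton, smul_eq_mul, mul_comm])
  set y := hW.fromSpec ⟨P, hP.isPrime⟩
  have hyW : y ∈ W := hW.range_fromSpec.le ⟨_, rfl⟩
  have hy := h y (hW.isAssociatedPoint_fromSpec hP)
  rw [mem_nonvanishing_iff σ (hWle hyW).2] at hy
  have : y ∈ X.basicOpen sW := by rw [basicOpen_rmap]; exact ⟨hyW, hy⟩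
  exact (hW.fromSpec_mem_basicOpen_iff _ sW).mp this hsP

end

/-- **Definition-Proposition (ZL-effective divisor).**
Let `X` be a noetherian scheme, `L` an invertible sheaf on `X`, `s ∈ H^0(X, L)` and
`φ : O_X → L` the associated morphism of `O_X`-modules.  Then the following are
equivalent: (1) `φ` is injective (i.e. `s` is a regular section and `Z(s)` defines
an effective Cartier divisor); (2) `s(x) ≠ 0` for every associated point `x` of `X`
(i.e. every associated point lies in the non-vanishing locus of `s`); (3) for every
associated point `x` of `X`, the closure of `{x}` in `X` is not contained in
`Supp Z(s)` (the complement of the non-vanishing locus). -/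
theorem regularSection_iff_associatedPoints
    {X : Scheme.{u}} [AlgebraicGeometry.IsNoetherian X]
    (L : InvSheaf X) (σ : L.Sections ⊤) :
    (IsRegularSection σ ↔
      ∀ x : X, IsAssociatedPoint X x → x ∈ nonvanishing σ) ∧
    (IsRegularSection σ ↔
      ∀ x : X, IsAssociatedPoint X x →
        ¬ closure ({x} : Set X) ⊆ ((nonvanishing σ : Set X))ᶜ) := by
  have h12 : IsRegularSection σ ↔ ∀ x : X, IsAssociatedPoint X x → x ∈ nonvanishing σ :=
    ⟨fun hσ _ hx => hσ.mem_nonvanishing hx, isRegularSection_of_forall_mem_nonvanishing σ⟩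
  refine ⟨h12, h12.trans (forall₂_congr fun x _ => ?_)⟩
  rw [← (nonvanishing σ).isOpen.isClosed_compl.mem_iff_closure_subset, Set.notMem_compl_iff]
  rfl

end Paper
end
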